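/- arXiv:2001.02220 — 2 statements merged into one kernel-verified Lean document; each statement's English description precedes it below -/
import Mathlib

section
/- Let p ≡ 3 (mod 8) be an odd prime. Then the strong starter S_{1/2} = { {x, 2^{-1}x} : x ∈ QR(p) } for Z/pZ is a Skolem starter. -/
/-!
Write `h = 2⁻¹ x`, so the pair is `{2h, h}`. The difference of the representatives of its elements
is `±(2h - h) = ±h` in `ZMod p`, so a pair of gap `d < p/2` must have `h = ±d`, i.e. `x = ±2d`;
conversely both `2d` and `-2d` give gap `d`. Since `p ≡ 3 (mod 4)`, `-1` is a non-residue, so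
exactly one of `2d` and `-2d` lies in `QR(p)`.
-/

/-- The set of quadratic residues modulo `p`: nonzero squares in `ZMod p`. -/
def QRset (p : ℕ) : Set (ZMod p) := {x | x ≠ 0 ∧ ∃ y : ZMod p, y ≠ 0 ∧ y ^ 2 = x}

/-- The "gap" of the pair `{z, c*z}`: the difference between the natural
representatives (in `{0,…,p-1}`) of its larger and smaller element. -/
def pairGap (p : ℕ) (c z : ZMod p) : ℕ :=
  max z.val (c * z).val - min z.val (c * z).val

theorem mem_QRset_iff {p : ℕ} {x : ZMod p} : x ∈ QRset p ↔ x ≠ 0 ∧ IsSquare x := by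
  refine ⟨fun ⟨hx, y, _, hy⟩ => ⟨hx, y, by rw [← hy, sq]⟩, fun ⟨hx, y, hy⟩ => ⟨hx, y, ?_, ?_⟩⟩
  · rintro rfl
    exact hx (by simpa using hy)
  · rw [hy, sq]

theorem isSquare_neg_iff_not_isSquare {F : Type*} [Field F] [Fintype F] [DecidableEq F]
    (hF : ¬IsSquare (-1 : F)) {a : F} (ha : a ≠ 0) : IsSquare (-a) ↔ ¬IsSquare a := by
  rw [← quadraticChar_one_iff_isSquare (neg_ne_zero.mpr ha),
    ← quadraticChar_neg_one_iff_not_isSquare, neg_eq_neg_one_mul, map_mul,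
    quadraticChar_neg_one_iff_not_isSquare.mpr hF]
  constructor <;> intro h <;> linarith

theorem existsUnique_isSquare_of_eq_or_eq_neg {F : Type*} [Field F] [Fintype F] [DecidableEq F]
    (hF : ¬IsSquare (-1 : F)) {a : F} (ha : a ≠ 0) :
    ∃! x : F, (x ≠ 0 ∧ IsSquare x) ∧ (x = a ∨ x = -a) := by
  have hna : -a ≠ 0 := neg_ne_zero.mpr ha
  have hneg := isSquare_neg_iff_not_isSquare hF ha
  by_cases hsq : IsSquare a
  · refine ⟨a, ⟨⟨ha, hsq⟩, Or.inl rfl⟩, ?_⟩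
    rintro x ⟨⟨-, hx⟩, rfl | rfl⟩
    · rfl
    · exact absurd hsq (hneg.mp hx)
  · refine ⟨-a, ⟨⟨hna, hneg.mpr hsq⟩, Or.inr rfl⟩, ?_⟩
    rintro x ⟨⟨-, hx⟩, rfl | rfl⟩
    · exact absurd hx hsq
    · rfl

namespace ZMod

theorem natCast_max_val_sub_min_val {n : ℕ} [NeZero n] (a b : ZMod n) :
    ((max a.val b.val - min a.val b.val : ℕ) : ZMod n) = a - b ∨
      ((max a.val b.val - min a.val b.val : ℕ) : ZMod n) = b - a := by
  rcases le_total a.val b.val with h | h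
  · right
    rw [max_eq_right h, min_eq_left h, Nat.cast_sub h, natCast_zmod_val, natCast_zmod_val]
  · left
    rw [max_eq_left h, min_eq_right h, Nat.cast_sub h, natCast_zmod_val, natCast_zmod_val]

end ZMod

section Prime

variable {p : ℕ} [Fact p.Prime]

theorem ZMod.two_ne_zero_of_ne_two (hp : p ≠ 2) : (2 : ZMod p) ≠ 0 :=
  Ring.two_ne_zero (by rwa [ZMod.ringChar_zmod_n])

theorem pairGap_neg {c : ZMod p} (hc : c ≠ 0) (z : ZMod p) :
    pairGap p c (-z) = pairGap p c z := by
  rcases eq_or_ne z 0 with rfl | hz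
  · rw [neg_zero]
  have hcz : c * z ≠ 0 := mul_ne_zero hc hz
  have h₁ := (c * z).val_lt
  have h₂ := z.val_lt
  unfold pairGap
  rw [mul_neg, ZMod.neg_val, ZMod.neg_val, if_neg hz, if_neg hcz]
  omega

theorem pairGap_inv_two_two_mul (hp : p ≠ 2) {d : ℕ} (hd : 2 * d < p) :
    pairGap p (2 : ZMod p)⁻¹ (2 * d) = d := by
  have hval : (2 * d : ZMod p).val = 2 * d := by exact_mod_cast ZMod.val_cast_of_lt hd
  unfold pairGap
  rw [inv_mul_cancel_left₀ (ZMod.two_ne_zero_of_ne_two hp), hval, ZMod.val_cast_of_lt (by omega)]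
  omega

theorem pairGap_inv_two_eq_iff (hp : p ≠ 2) {d : ℕ} (hd : 2 * d < p) (x : ZMod p) :
    pairGap p (2 : ZMod p)⁻¹ x = d ↔ x = 2 * d ∨ x = -(2 * d) := by
  have h2 : (2 : ZMod p) * 2⁻¹ = 1 := mul_inv_cancel₀ (ZMod.two_ne_zero_of_ne_two hp)
  constructor
  · intro hx
    unfold pairGap at hx
    -- `d` is `±(x - 2⁻¹ x) = ±2⁻¹ x` in `ZMod p`
    rcases ZMod.natCast_max_val_sub_min_val x (2⁻¹ * x) with h | h <;> rw [hx] at h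
    · left
      linear_combination x * h2 - 2 * h
    · right
      linear_combination 2 * h + x * h2
  · rintro (rfl | rfl)
    · exact pairGap_inv_two_two_mul hp hd
    · rw [pairGap_neg (inv_ne_zero (ZMod.two_ne_zero_of_ne_two hp))]
      exact pairGap_inv_two_two_mul hp hd

end Prime

/-- The strong starter `S_{1/2} = {{x, 2⁻¹x} : x ∈ QR(p)}` is Skolem: for each
`d ∈ {1,…,(p-1)/2}` there is exactly one pair whose larger element minus its
smaller element (as residues in `{1,…,p-1}`) equals `d`. -/
theorem S_half_skolem (p : ℕ) (hp : p.Prime) (hp8 : p % 8 = 3) :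
    ∀ d : ℕ, 1 ≤ d → d ≤ (p - 1) / 2 →
      ∃! x : ZMod p, x ∈ QRset p ∧ pairGap p (2 : ZMod p)⁻¹ x = d := by
  intro d hd1 hd2
  have : Fact p.Prime := ⟨hp⟩
  have hdp : 2 * d < p := by omega
  have hneg_one : ¬IsSquare (-1 : ZMod p) := by
    rw [ZMod.exists_sq_eq_neg_one_iff]
    omega
  have h2d : ((2 * d : ℕ) : ZMod p) ≠ 0 := by
    rw [Ne, ZMod.natCast_eq_zero_iff]
    exact Nat.not_dvd_of_pos_of_lt (by omega) hdp
  push_cast at h2d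
  simpa only [mem_QRset_iff, pairGap_inv_two_eq_iff (by omega) hdp] using
    existsUnique_isSquare_of_eq_or_eq_neg hneg_one h2d
end

section
/- Let p < q be odd primes with p, q ≡ 3 (mod 8) and (p-1) ∤ (q-1). Then Z/(pq)Z admits a strong Skolem starter. -/
/-!
Call `z : ZMod (p * q)` good when its first nonzero Chinese-remainder coordinate is a square.
Since `p, q ≡ 3 (mod 8)`, both `-1` and `2` are nonsquares modulo `p` and modulo `q`, so
multiplying a nonzero `z` by `-1` or by `2` toggles goodness. For each `d = 1, …, k` let `y` be
the good one of `±d` and take the pair `{y, 2y}`, ordered as `{d, 2d}` or `{-2d, -d}` so that it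
is Skolem with difference `d`. All the `y` are good and all the `2y` are not, so the `2k`
elements are distinct; the sums `3y` are distinct and nonzero because `3 ∤ pq`, and `p ≠ 3`
is exactly what `(p - 1) ∤ (q - 1)` provides.
-/

/-- `ZMod n`, with `n = 2k+1` odd, admits a strong Skolem starter: there are pairs
`{x_i, x_i + i}` for `i = 1,…,k` (encoded by `x : Fin k → ZMod n`, the pair indexed by
`i : Fin k` being `{x i, x i + (i+1)}`) such that
* (Skolem) in each pair the larger residue minus the smaller one is exactly its index:
  `(x i + (i+1)).val = (x i).val + (i+1)`;
* (starter) the `2k` elements of the pairs are pairwise distinct and nonzero, hence they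
  partition the nonzero residues, and the differences `±(i+1)` cover all nonzero residues;
* (strong) the pair sums `x i + (x i + (i+1))` are nonzero and pairwise distinct. -/
def HasStrongSkolemStarter (n : ℕ) : Prop :=
  ∃ k : ℕ, n = 2 * k + 1 ∧ ∃ x : Fin k → ZMod n,
    (∀ i : Fin k, (x i + ((i : ℕ) + 1 : ℕ)).val = (x i).val + ((i : ℕ) + 1)) ∧
    Function.Injective (fun j : Fin k × Bool =>
      if j.2 then x j.1 + ((j.1 : ℕ) + 1 : ℕ) else x j.1) ∧
    (∀ i : Fin k, x i ≠ 0) ∧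
    (∀ i : Fin k, x i + ((i : ℕ) + 1 : ℕ) ≠ 0) ∧
    Function.Injective (fun i : Fin k => x i + (x i + ((i : ℕ) + 1 : ℕ))) ∧
    (∀ i : Fin k, x i + (x i + ((i : ℕ) + 1 : ℕ)) ≠ 0)

theorem FiniteField.isSquare_mul_iff_not_of_not_isSquare {F : Type*} [Field F] [Fintype F]
    {u a : F} (hu : ¬IsSquare u) (ha : a ≠ 0) : IsSquare (u * a) ↔ ¬IsSquare a := by
  classical
  have hu0 : u ≠ 0 := by rintro rfl; exact hu IsSquare.zero
  rw [← quadraticChar_one_iff_isSquare (mul_ne_zero hu0 ha),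
    ← quadraticChar_neg_one_iff_not_isSquare, map_mul,
    quadraticChar_neg_one_iff_not_isSquare.mpr hu]
  omega

def IsSquareAtFirstNonzero {F K : Type*} [Zero F] [Mul F] [Mul K] (z : F × K) : Prop :=
  z.1 = 0 ∧ IsSquare z.2 ∨ z.1 ≠ 0 ∧ IsSquare z.1

theorem isSquareAtFirstNonzero_mul_iff {F K : Type*} [Field F] [Fintype F] [Field K] [Fintype K]
    {u z : F × K} (hu₁ : ¬IsSquare u.1) (hu₂ : ¬IsSquare u.2) (hz : z ≠ 0) :
    IsSquareAtFirstNonzero (u * z) ↔ ¬IsSquareAtFirstNonzero z := by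
  have hu₁0 : u.1 ≠ 0 := by rintro h; exact hu₁ (h ▸ IsSquare.zero)
  by_cases h₁ : z.1 = 0
  · have h₂ : z.2 ≠ 0 := fun h₂ => hz (Prod.ext h₁ h₂)
    simp [IsSquareAtFirstNonzero, h₁, FiniteField.isSquare_mul_iff_not_of_not_isSquare hu₂ h₂]
  · simp [IsSquareAtFirstNonzero, h₁, hu₁0,
      FiniteField.isSquare_mul_iff_not_of_not_isSquare hu₁ h₁]

theorem injective_bool_ite {ι α : Type*} {f g : ι → α} (hf : f.Injective) (hg : g.Injective)
    (hfg : ∀ i j, f i ≠ g j) (s : ι → Bool) :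
    Function.Injective (fun j : ι × Bool => if j.2 = s j.1 then g j.1 else f j.1) := by
  rintro ⟨i, b⟩ ⟨j, c⟩ h
  dsimp only at h
  split_ifs at h with hb hc hc
  · obtain rfl := hg h
    simp_all
  · exact absurd h.symm (hfg j i)
  · exact absurd h (hfg i j)
  · obtain rfl := hf h
    simp only [Prod.mk.injEq, true_and]
    revert hb hc
    cases b <;> cases c <;> simp

section SkolemPair

variable {R : Type*} [CommRing R] (P : R → Prop) [DecidablePred P]

def signedRep (d : R) : R := if P d then d else -d

def skolemBase (d : R) : R := if P d then d else -(2 * d)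

theorem signedRep_spec (hneg : ∀ z ≠ 0, P (-z) ↔ ¬P z) {d : R} (hd : d ≠ 0) :
    P (signedRep P d) := by
  unfold signedRep
  split_ifs with h
  · exact h
  · exact (hneg d hd).mpr h

theorem signedRep_ne_zero {d : R} (hd : d ≠ 0) : signedRep P d ≠ 0 := by
  unfold signedRep
  split_ifs <;> simpa

theorem eq_or_add_eq_zero_of_signedRep_eq {d e : R} (h : signedRep P d = signedRep P e) :
    d = e ∨ d + e = 0 := by
  unfold signedRep at h
  split_ifs at h
  · exact .inl h
  · exact .inr (by rw [h, neg_add_cancel])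
  · exact .inr (by rw [← h, add_neg_cancel])
  · exact .inl (neg_inj.mp h)

theorem skolemBase_pair (d : R) (b : Bool) :
    (if b then skolemBase P d + d else skolemBase P d) =
      if b = decide (P d) then 2 * signedRep P d else signedRep P d := by
  unfold skolemBase signedRep
  by_cases h : P d <;> cases b <;> simp [h] <;> ring

theorem skolemBase_sum (d : R) : skolemBase P d + (skolemBase P d + d) = 3 * signedRep P d := by
  unfold skolemBase signedRep
  split_ifs <;> ring

end SkolemPair

theorem ZMod.val_skolemBase_add {n : ℕ} [NeZero n] (P : ZMod n → Prop) [DecidablePred P]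
    {d : ZMod n} (hd : d ≠ 0) (hdn : 2 * d.val < n) :
    (skolemBase P d + d).val = (skolemBase P d).val + d.val := by
  have hd0 : d.val ≠ 0 := (ZMod.val_ne_zero d).mpr hd
  have h2d : (2 * d).val = 2 * d.val := by
    rw [two_mul, ZMod.val_add_of_lt (by omega), two_mul]
  have h2d0 : 2 * d ≠ 0 := by
    rw [← ZMod.val_ne_zero, h2d]
    omega
  unfold skolemBase
  split_ifs
  · exact ZMod.val_add_of_lt (by omega)
  · exact ZMod.val_add_of_lt (by rw [ZMod.neg_val, if_neg h2d0, h2d]; omega)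

theorem injective_signedRep_natCast_succ {k : ℕ} (P : ZMod (2 * k + 1) → Prop)
    [DecidablePred P] :
    Function.Injective fun i : Fin k => signedRep P (((i : ℕ) + 1 : ℕ) : ZMod (2 * k + 1)) := by
  have hval (i : Fin k) : (((i : ℕ) + 1 : ℕ) : ZMod (2 * k + 1)).val = i + 1 :=
    ZMod.val_cast_of_lt (by omega)
  intro i j h
  rcases eq_or_add_eq_zero_of_signedRep_eq P h with h | h
  · have hij := congrArg ZMod.val h
    rw [hval, hval] at hij
    exact Fin.ext (by omega)
  · have hsum := ZMod.val_add_of_lt (a := (((i : ℕ) + 1 : ℕ) : ZMod (2 * k + 1)))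
      (b := ((j : ℕ) + 1 : ℕ)) (by rw [hval, hval]; omega)
    rw [h, ZMod.val_zero, hval, hval] at hsum
    omega

theorem hasStrongSkolemStarter_of_neg_and_two_swap {n : ℕ} (P : ZMod n → Prop) (hn : Odd n)
    (h3 : ¬3 ∣ n) (hneg : ∀ z ≠ 0, P (-z) ↔ ¬P z) (htwo : ∀ z ≠ 0, P (2 * z) ↔ ¬P z) :
    HasStrongSkolemStarter n := by
  classical
  obtain ⟨k, rfl⟩ := hn
  have hunit2 : IsUnit (2 : ZMod (2 * k + 1)) := by
    simpa using (ZMod.isUnit_iff_coprime 2 (2 * k + 1)).mpr (by simp)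
  have hunit3 : IsUnit (3 : ZMod (2 * k + 1)) := by
    simpa using (ZMod.isUnit_iff_coprime 3 (2 * k + 1)).mpr
      ((Nat.Prime.coprime_iff_not_dvd Nat.prime_three).mpr h3)
  set d : Fin k → ZMod (2 * k + 1) := fun i => ((i : ℕ) + 1 : ℕ)
  have hd_val (i : Fin k) : (d i).val = i + 1 := ZMod.val_cast_of_lt (by omega)
  have hd0 (i : Fin k) : d i ≠ 0 := by rw [← ZMod.val_ne_zero, hd_val]; omega
  set y := fun i => signedRep P (d i)
  have hy0 (i : Fin k) : y i ≠ 0 := signedRep_ne_zero P (hd0 i)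
  have hPy (i : Fin k) : P (y i) := signedRep_spec P hneg (hd0 i)
  have hy_inj : Function.Injective y := injective_signedRep_natCast_succ P
  have hpair_ne (i : Fin k) (b : Bool) :
      (if b then skolemBase P (d i) + d i else skolemBase P (d i)) ≠ 0 := by
    rw [skolemBase_pair]
    split_ifs
    · exact hunit2.mul_right_eq_zero.not.mpr (hy0 i)
    · exact hy0 i
  have hsum (i : Fin k) :
      skolemBase P (d i) + (skolemBase P (d i) + ((i : ℕ) + 1 : ℕ)) = 3 * y i :=
    skolemBase_sum P (d i)
  refine ⟨k, rfl, fun i => skolemBase P (d i), fun i => ?_, ?_, fun i => hpair_ne i false,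
    fun i => hpair_ne i true, ?_, fun i => ?_⟩
  · rw [ZMod.val_skolemBase_add P (hd0 i) (by rw [hd_val]; omega), hd_val]
  · change Function.Injective fun j : Fin k × Bool =>
      if j.2 then skolemBase P (d j.1) + d j.1 else skolemBase P (d j.1)
    simp only [skolemBase_pair]
    refine injective_bool_ite (g := fun i => 2 * y i) hy_inj
      (fun i j h => hy_inj (hunit2.mul_right_injective h)) (fun i j h => ?_)
      (fun i => decide (P (d i)))
    exact (htwo _ (hy0 j)).mp (h ▸ hPy i) (hPy j)
  · simp only [hsum]
    exact hunit3.mul_right_injective.comp hy_inj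
  · simp only [hsum]
    exact hunit3.mul_right_eq_zero.not.mpr (hy0 i)

theorem ZMod.not_isSquare_neg_one_of_mod_eight_eq_three {p : ℕ} [Fact p.Prime] (hp : p % 8 = 3) :
    ¬IsSquare (-1 : ZMod p) := by
  rw [ZMod.exists_sq_eq_neg_one_iff]
  omega

theorem ZMod.not_isSquare_two_of_mod_eight_eq_three {p : ℕ} [Fact p.Prime] (hp : p % 8 = 3) :
    ¬IsSquare (2 : ZMod p) := by
  rw [ZMod.exists_sq_eq_two_iff (by omega)]
  omega

theorem zmod_pq_has_strong_skolem_starter (p q : ℕ) (hp : p.Prime) (hq : q.Prime)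
    (hpq : p < q) (hp8 : p % 8 = 3) (hq8 : q % 8 = 3)
    (hndvd : ¬(p - 1) ∣ (q - 1)) :
    HasStrongSkolemStarter (p * q) := by
  have := Fact.mk hp
  have := Fact.mk hq
  have hp3 : p ≠ 3 := by
    rintro rfl
    exact hndvd ⟨(q - 1) / 2, by omega⟩
  set e := ZMod.chineseRemainder ((Nat.coprime_primes hp hq).mpr hpq.ne)
  have hswap {t : ZMod (p * q)} (htp : ¬IsSquare (e t).1) (htq : ¬IsSquare (e t).2)
      (z : ZMod (p * q)) (hz : z ≠ 0) :
      IsSquareAtFirstNonzero (e (t * z)) ↔ ¬IsSquareAtFirstNonzero (e z) := by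
    rw [map_mul]
    exact isSquareAtFirstNonzero_mul_iff htp htq (by simpa using hz)
  refine hasStrongSkolemStarter_of_neg_and_two_swap (fun z => IsSquareAtFirstNonzero (e z))
    ((hp.odd_of_ne_two (by omega)).mul (hq.odd_of_ne_two (by omega))) ?_ ?_ ?_
  · rw [Nat.prime_three.dvd_mul, Nat.prime_dvd_prime_iff_eq Nat.prime_three hp,
      Nat.prime_dvd_prime_iff_eq Nat.prime_three hq]
    omega
  · intro z hz
    simpa using hswap (t := -1) (by simpa using ZMod.not_isSquare_neg_one_of_mod_eight_eq_three hp8)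
      (by simpa using ZMod.not_isSquare_neg_one_of_mod_eight_eq_three hq8) z hz
  · exact hswap (by rw [map_ofNat]; exact ZMod.not_isSquare_two_of_mod_eight_eq_three hp8)
      (by rw [map_ofNat]; exact ZMod.not_isSquare_two_of_mod_eight_eq_three hq8)
end
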